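/- arXiv:2510.03583 — 2 statements merged into one kernel-verified Lean document; each statement's English description precedes it below -/
import Mathlib

section
/- Let A be a G-graded algebra over a field with graded involution *, and let g ∈ G. Suppose that for all homogeneous symmetric u of degree g² and all homogeneous symmetric v of degree g one has uv + vu = 0, and for all homogeneous skew w of degree g² and all homogeneous symmetric v of degree g one has wv + vw = 0. Then abc = 0 for all homogeneous symmetric a, b, c of degree g. -/
/-- If symmetric elements of degree g² anticommute with symmetric elements of
degree g, and skew elements of degree g² anticommute with symmetric elements of
degree g, then abc = 0 for symmetric a, b, c of degree g (char F ≠ 2). -/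
theorem stmt6 {F A : Type*} [Field F] [Ring A] [Algebra F A]
    (h2F : (2 : F) ≠ 0)
    {G : Type*} [CommGroup G] (𝒜 : G → Submodule F A)
    (hmul : ∀ (g h : G) (x y : A), x ∈ 𝒜 g → y ∈ 𝒜 h → x * y ∈ 𝒜 (g * h))
    (σ : A →ₗ[F] A)
    (hanti : ∀ x y : A, σ (x * y) = σ y * σ x)
    (hinv : ∀ x : A, σ (σ x) = x)
    (hgr : ∀ (g : G) (x : A), x ∈ 𝒜 g → σ x ∈ 𝒜 g)
    (g : G)
    (h1 : ∀ u ∈ 𝒜 (g * g), σ u = u → ∀ v ∈ 𝒜 g, σ v = v → u * v + v * u = 0)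
    (h2 : ∀ w ∈ 𝒜 (g * g), σ w = -w → ∀ v ∈ 𝒜 g, σ v = v → w * v + v * w = 0) :
    ∀ a ∈ 𝒜 g, σ a = a → ∀ b ∈ 𝒜 g, σ b = b → ∀ c ∈ 𝒜 g, σ c = c →
      a * b * c = 0 := by
  have two_cancel : ∀ t : A, t + t = 0 → t = 0 := by
    intro t ht
    have h : (2 : F) • t = 0 := by rw [two_smul]; exact ht
    rcases smul_eq_zero.mp h with h | h
    · exact absurd h h2F
    · exact h
  have key : ∀ x ∈ 𝒜 g, σ x = x → ∀ y ∈ 𝒜 g, σ y = y → ∀ z ∈ 𝒜 g, σ z = z →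
      x * y * z + z * (x * y) = 0 := by
    intro x hx hsx y hy hsy z hz hsz
    have hu : (x * y + y * x) * z + z * (x * y + y * x) = 0 := by
      apply h1 _ (add_mem (hmul g g x y hx hy) (hmul g g y x hy hx)) _ z hz hsz
      rw [map_add, hanti, hanti, hsx, hsy, add_comm]
    have hw : (x * y - y * x) * z + z * (x * y - y * x) = 0 := by
      apply h2 _ (sub_mem (hmul g g x y hx hy) (hmul g g y x hy hx)) _ z hz hsz
      rw [map_sub, hanti, hanti, hsx, hsy, neg_sub]
    apply two_cancel
    have e : (x * y * z + z * (x * y)) + (x * y * z + z * (x * y)) =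
        ((x * y + y * x) * z + z * (x * y + y * x)) +
        ((x * y - y * x) * z + z * (x * y - y * x)) := by noncomm_ring
    rw [e, hu, hw, add_zero]
  intro a ha hsa b hb hsb c hc hsc
  have k1 := key a ha hsa b hb hsb c hc hsc
  have k2 := key c hc hsc a ha hsa b hb hsb
  have k3 := key b hb hsb c hc hsc a ha hsa
  apply two_cancel
  have e : a * b * c + a * b * c =
      (a * b * c + c * (a * b)) - (c * a * b + b * (c * a)) + (b * c * a + a * (b * c)) := by
    noncomm_ring
  rw [e, k1, k2, k3]; simp
end

section
/- Let A be an algebra over a field of characteristic ≠ 2 and S ⊆ A a subset such that abc + cba = 0 for all a,b,c ∈ S and abdc + bdca = 0 for all a,b,c,d ∈ S. Then abcd = −bcda = badc = −dabc for all a,b,c,d ∈ S. -/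
/-- From abc + cba = 0 and abdc + bdca = 0 on S one gets the sign rewritings
abcd = −bcda = badc = −dabc. -/
theorem stmt12 {F A : Type*} [Field F] (h2F : (2 : F) ≠ 0) [Ring A] [Algebra F A]
    (S : Set A)
    (h1 : ∀ a ∈ S, ∀ b ∈ S, ∀ c ∈ S, a * b * c + c * b * a = 0)
    (h2 : ∀ a ∈ S, ∀ b ∈ S, ∀ c ∈ S, ∀ d ∈ S,
        a * b * d * c + b * d * c * a = 0) :
    ∀ a ∈ S, ∀ b ∈ S, ∀ c ∈ S, ∀ d ∈ S,
      a * b * c * d = -(b * c * d * a) ∧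
      a * b * c * d = b * a * d * c ∧
      a * b * c * d = -(d * a * b * c) := by
  intro a ha b hb c hc d hd
  have e1 := h2 a ha b hb d hd c hc
  have e2 := h2 c hc b hb d hd a ha
  have e3 := h1 a ha b hb c hc
  have e4 := h2 d hd a ha c hc b hb
  refine ⟨eq_neg_of_add_eq_zero_left e1, ?_, eq_neg_of_add_eq_zero_right e4⟩
  have h3 : a * b * c = -(c * b * a) := eq_neg_of_add_eq_zero_left e3
  have h4 : c * b * a * d = -(b * a * d * c) := eq_neg_of_add_eq_zero_left e2
  calc a * b * c * d = -(c * b * a) * d := by rw [h3]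
    _ = -(c * b * a * d) := by rw [neg_mul]
    _ = b * a * d * c := by rw [h4, neg_neg]
end
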